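/- arXiv:2202.03180 — 3 statements merged into one kernel-verified Lean document; each statement's English description precedes it below -/
import Mathlib

section
/- Let h(x) = φ(|x|) with φ : ℝ₊ → ℝ₊ non-increasing, h ∈ L¹_loc(ℝ^d), distribution function r(s), and let Ω ⊂ ℝ^d be a bounded measurable set. Then for every pair of points x₁, x₂ ∈ ℝ^d, ∫_Ω |h(x₁−y) − h(x₂−y)| dy = ∫_0^∞ |Ω ∩ (B_{r(s)}(x₁) Δ B_{r(s)}(x₂))| ds, where Δ denotes symmetric difference. -/
open MeasureTheory Metric Set Filter
open scoped RealInnerProductSpace symmDiff ENNReal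

noncomputable def upperDensity {d : ℕ} (Ω : Set (EuclideanSpace ℝ (Fin d)))
    (x : EuclideanSpace ℝ (Fin d)) : ℝ≥0∞ :=
  Filter.limsup (fun r : ℝ => volume (Ω ∩ Metric.ball x r) / volume (Metric.ball x r))
    (nhdsWithin 0 (Set.Ioi 0))

/-- The essential boundary: points of strictly positive upper density for both `Ω` and `Ωᶜ`. -/
noncomputable def essBoundary {d : ℕ} (Ω : Set (EuclideanSpace ℝ (Fin d))) :
    Set (EuclideanSpace ℝ (Fin d)) :=
  {x | 0 < upperDensity Ω x ∧ 0 < upperDensity Ωᶜ x}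

/-- The distribution function of `φ` on `ℝ₊`: `r s = L¹({x ≥ 0 : φ x > s})`. -/
noncomputable def distrib (φ : ℝ → ℝ) (s : ℝ) : ℝ≥0∞ :=
  volume {x ∈ Set.Ici (0 : ℝ) | s < φ x}

/-- Ball of (possibly infinite) radius `ρ ∈ [0,∞]` centered at `x`. -/
def ballE {d : ℕ} (x : EuclideanSpace ℝ (Fin d)) (ρ : ℝ≥0∞) : Set (EuclideanSpace ℝ (Fin d)) :=
  {y | ENNReal.ofReal (dist x y) < ρ}

/-!
For `a, b ≥ 0`, `|a - b|` is the length of the set of `s > 0` lying below exactly one of `a`, `b`.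
Integrating this over `y ∈ Ω` and swapping the integrals (Tonelli on the product) turns the left
side into `∫ |Ω ∩ ({h(x₁ - ·) > s} ∆ {h(x₂ - ·) > s})| ds`. As `φ` is non-increasing, the set
`{r ≥ 0 | s < φ r}` is an interval starting at `0` of length `r(s)`, so `{h(x - ·) > s}` differs
from the ball of radius `r(s)` about `x` only on a sphere, which is Lebesgue-null.
-/

lemma Set.Iio_symmDiff_Iio {α : Type*} [LinearOrder α] (a b : α) :
    Iio a ∆ Iio b = Ico (min a b) (max a b) := by
  ext s
  simp only [mem_symmDiff, mem_Iio, mem_Ico, min_le_iff, lt_max_iff, not_lt]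
  grind

lemma restrict_Ioi_Iio_symmDiff_Iio {a b : ℝ} (ha : 0 ≤ a) (hb : 0 ≤ b) :
    volume.restrict (Ioi 0) (Iio a ∆ Iio b) = ENNReal.ofReal |a - b| := by
  rw [Measure.restrict_congr_set Ioi_ae_eq_Ici, Iio_symmDiff_Iio,
    Measure.restrict_apply measurableSet_Ico, inter_eq_left.mpr (Ico_subset_Ici_self.trans
      (Ici_subset_Ici.mpr (le_min ha hb))), Real.volume_Ico, max_sub_min_eq_abs, abs_sub_comm]

lemma AntitoneOn.measurable_comp {α : Type*} [MeasurableSpace α] {φ : ℝ → ℝ}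
    (hφ : AntitoneOn φ (Ici 0)) {f : α → ℝ} (hf : Measurable f) (hf₀ : ∀ y, 0 ≤ f y) :
    Measurable fun y => φ (f y) := by
  have hanti : Antitone fun r => φ (max r 0) := fun r r' h =>
    hφ (le_max_right r 0) (le_max_right r' 0) (max_le_max_right 0 h)
  have hcomp : (fun y => φ (f y)) = (fun r => φ (max r 0)) ∘ f :=
    funext fun y => by simp [max_eq_left (hf₀ y)]
  exact hcomp ▸ hanti.measurable.comp hf

lemma lintegral_measure_Iio_symmDiff_Iio_comm {α : Type*} [MeasurableSpace α]
    (μ : Measure α) (ν : Measure ℝ) [SFinite μ] [SFinite ν] {f g : α → ℝ}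
    (hf : Measurable f) (hg : Measurable g) :
    ∫⁻ y, ν (Iio (f y) ∆ Iio (g y)) ∂μ = ∫⁻ s, μ ({y | s < f y} ∆ {y | s < g y}) ∂ν := by
  have hS : MeasurableSet ({p : α × ℝ | p.2 < f p.1} ∆ {p | p.2 < g p.1}) :=
    (measurableSet_lt measurable_snd (hf.comp measurable_fst)).symmDiff
      (measurableSet_lt measurable_snd (hg.comp measurable_fst))
  exact (Measure.prod_apply hS).symm.trans (Measure.prod_apply_symm hS)

lemma AntitoneOn.lt_of_ofReal_lt_distrib {φ : ℝ → ℝ} (hφ : AntitoneOn φ (Ici 0)) {s r : ℝ}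
    (hr : 0 ≤ r) (h : ENNReal.ofReal r < distrib φ s) : s < φ r := by
  by_contra! hle
  have hsub : {t ∈ Ici 0 | s < φ t} ⊆ Ico 0 r := fun t ht =>
    ⟨ht.1, lt_of_not_ge fun hrt => (ht.2.trans_le (hφ hr ht.1 hrt)).not_ge hle⟩
  refine h.not_ge ((measure_mono hsub).trans ?_)
  rw [Real.volume_Ico, sub_zero]

lemma AntitoneOn.ofReal_le_distrib {φ : ℝ → ℝ} (hφ : AntitoneOn φ (Ici 0)) {s r : ℝ}
    (hr : 0 ≤ r) (h : s < φ r) : ENNReal.ofReal r ≤ distrib φ s :=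
  calc ENNReal.ofReal r = volume (Icc 0 r) := by rw [Real.volume_Icc, sub_zero]
    _ ≤ distrib φ s := measure_mono fun t ht => ⟨ht.1, h.trans_le (hφ ht.1 hr ht.2)⟩

lemma AntitoneOn.setOf_lt_ae_eq_ballE {d : ℕ} [Nontrivial (EuclideanSpace ℝ (Fin d))]
    {φ : ℝ → ℝ} (hφ : AntitoneOn φ (Ici 0)) (s : ℝ) (x : EuclideanSpace ℝ (Fin d)) :
    {y | s < φ ‖x - y‖} =ᵐ[volume] ballE x (distrib φ s) := by
  refine measure_symmDiff_eq_zero_iff.mp (measure_mono_null (fun y hy => ?_)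
    (Measure.addHaar_sphere volume x (distrib φ s).toReal))
  have hdist : ENNReal.ofReal (dist x y) = distrib φ s := by
    simp only [mem_symmDiff, mem_ofPred_eq, ballE, ← dist_eq_norm] at hy
    rcases hy with ⟨hlt, hball⟩ | ⟨hball, hlt⟩
    · exact (hφ.ofReal_le_distrib dist_nonneg hlt).antisymm (not_lt.mp hball)
    · exact absurd (hφ.lt_of_ofReal_lt_distrib dist_nonneg hball) hlt
  rw [mem_sphere, dist_comm, ← hdist, ENNReal.toReal_ofReal dist_nonneg]

theorem stmt9_general {d : ℕ} (φ : ℝ → ℝ) (hmono : AntitoneOn φ (Set.Ici 0))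
    (hnn : ∀ x ∈ Set.Ici (0 : ℝ), 0 ≤ φ x)
    (Ω : Set (EuclideanSpace ℝ (Fin d))) :
    ∀ x₁ x₂ : EuclideanSpace ℝ (Fin d),
      ∫⁻ y in Ω, ENNReal.ofReal |φ ‖x₁ - y‖ - φ ‖x₂ - y‖|
        = ∫⁻ s in Set.Ioi (0 : ℝ),
            volume (Ω ∩ (symmDiff (ballE x₁ (distrib φ s)) (ballE x₂ (distrib φ s)))) := by
  intro x₁ x₂
  rcases subsingleton_or_nontrivial (EuclideanSpace ℝ (Fin d)) with _ | _
  · simp [Subsingleton.elim x₁ x₂]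
  have hmeas (x : EuclideanSpace ℝ (Fin d)) : Measurable fun y => φ ‖x - y‖ :=
    hmono.measurable_comp (measurable_const.sub measurable_id).norm fun _ => norm_nonneg _
  calc ∫⁻ y in Ω, ENNReal.ofReal |φ ‖x₁ - y‖ - φ ‖x₂ - y‖|
      = ∫⁻ y in Ω, volume.restrict (Ioi 0) (Iio (φ ‖x₁ - y‖) ∆ Iio (φ ‖x₂ - y‖)) := by
        refine lintegral_congr fun y => ?_
        rw [restrict_Ioi_Iio_symmDiff_Iio (hnn _ (norm_nonneg _)) (hnn _ (norm_nonneg _))]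
    _ = ∫⁻ s in Ioi 0, volume.restrict Ω ({y | s < φ ‖x₁ - y‖} ∆ {y | s < φ ‖x₂ - y‖}) :=
        lintegral_measure_Iio_symmDiff_Iio_comm _ _ (hmeas x₁) (hmeas x₂)
    _ = _ := by
        refine lintegral_congr fun s => ?_
        rw [Measure.restrict_apply ((measurableSet_lt measurable_const (hmeas x₁)).symmDiff
          (measurableSet_lt measurable_const (hmeas x₂))), inter_comm]
        exact measure_congr ((ae_eq_refl Ω).inter
          ((hmono.setOf_lt_ae_eq_ballE s x₁).symmDiff (hmono.setOf_lt_ae_eq_ballE s x₂)))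

theorem stmt9 {d : ℕ} (φ : ℝ → ℝ) (hmono : AntitoneOn φ (Set.Ici 0))
    (hnn : ∀ x ∈ Set.Ici (0 : ℝ), 0 ≤ φ x)
    (hloc : MeasureTheory.LocallyIntegrable (fun x : EuclideanSpace ℝ (Fin d) => φ ‖x‖) volume)
    (Ω : Set (EuclideanSpace ℝ (Fin d))) (hΩ : MeasurableSet Ω)
    (hb : Bornology.IsBounded Ω) :
    ∀ x₁ x₂ : EuclideanSpace ℝ (Fin d),
      ∫⁻ y in Ω, ENNReal.ofReal |φ ‖x₁ - y‖ - φ ‖x₂ - y‖|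
        = ∫⁻ s in Set.Ioi (0 : ℝ),
            volume (Ω ∩ (symmDiff (ballE x₁ (distrib φ s)) (ballE x₂ (distrib φ s)))) :=
  stmt9_general φ hmono hnn Ω
end

section
/- Let φ : ℝ₊ → ℝ₊ be non-increasing with distribution function r, let η := L¹({φ = ess sup φ}), and let λ > 0. Then L¹({s ∈ ℝ₊ : 0 < r(s) < λ}) > 0 if and only if λ > η. -/
open MeasureTheory Metric Set Filter
open scoped RealInnerProductSpace symmDiff ENNReal

/-!
For `s ≥ 0`, `r s > 0` exactly when `s` lies below the essential supremum `M` of `φ` on `ℝ₊`, and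
then `r s ≥ η` because the plateau `{φ = M}` lies in `{φ > s}`; this gives `⇒`. Conversely, if
`η < x < λ` then `φ x < M` (otherwise `(0, x]` would lie in the plateau), and every level
`s ∈ [φ x, M)` has `0 < r s ≤ x < λ`.
-/

noncomputable def essSupOnIci (φ : ℝ → ℝ) : ℝ≥0∞ :=
  essSup (fun x => ENNReal.ofReal (φ x)) (volume.restrict (Ici 0))

def essSupPlateau (φ : ℝ → ℝ) : Set ℝ :=
  {x ∈ Ici (0 : ℝ) | ENNReal.ofReal (φ x) = essSupOnIci φ}

theorem distrib_antitone (φ : ℝ → ℝ) : Antitone (distrib φ) :=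
  fun _ _ hst => measure_mono fun _ hx => ⟨hx.1, hst.trans_lt hx.2⟩

section EssSupOnIci

variable {φ : ℝ → ℝ}

theorem essSupOnIci_le (hφ : AntitoneOn φ (Ici 0)) : essSupOnIci φ ≤ ENNReal.ofReal (φ 0) :=
  essSup_le_of_ae_le _ <| by
    filter_upwards [ae_restrict_mem measurableSet_Ici] with x hx
    exact ENNReal.ofReal_le_ofReal (hφ self_mem_Ici hx hx)

theorem essSupOnIci_ne_top (hφ : AntitoneOn φ (Ici 0)) : essSupOnIci φ ≠ ∞ :=
  ((essSupOnIci_le hφ).trans_lt ENNReal.ofReal_lt_top).ne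

/-- If `φ x` exceeded the essential supremum, so would `φ` on all of `(0, x]`, a set of positive
measure. -/
theorem ofReal_le_essSupOnIci (hφ : AntitoneOn φ (Ici 0)) {x : ℝ} (hx : 0 < x) :
    ENNReal.ofReal (φ x) ≤ essSupOnIci φ := by
  by_contra! h
  have hnull : volume.restrict (Ici 0) {y | essSupOnIci φ < ENNReal.ofReal (φ y)} = 0 := by
    have := ENNReal.ae_le_essSup (μ := volume.restrict (Ici (0 : ℝ))) fun y => ENNReal.ofReal (φ y)
    simpa only [ae_iff, not_le, essSupOnIci] using this
  rw [Measure.restrict_apply' measurableSet_Ici] at hnull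
  have hsub : Ioc 0 x ⊆ {y | essSupOnIci φ < ENNReal.ofReal (φ y)} ∩ Ici 0 := fun y hy =>
    ⟨h.trans_le (ENNReal.ofReal_le_ofReal (hφ hy.1.le hx.le hy.2)), hy.1.le⟩
  have := measure_mono_null hsub hnull
  simp only [Real.volume_Ioc, sub_zero, ENNReal.ofReal_eq_zero] at this
  exact this.not_gt hx

theorem distrib_pos_of_ofReal_lt_essSupOnIci {s : ℝ} (hs : ENNReal.ofReal s < essSupOnIci φ) :
    0 < distrib φ s := by
  refine pos_iff_ne_zero.2 fun h0 => hs.not_ge (essSup_le_of_ae_le _ ?_)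
  rw [EventuallyLE, ae_iff, Measure.restrict_apply' measurableSet_Ici]
  refine measure_mono_null ?_ h0
  intro x hx
  exact ⟨hx.2, lt_of_not_ge fun hc => hx.1 (ENNReal.ofReal_le_ofReal hc)⟩

theorem ofReal_lt_essSupOnIci_of_distrib_pos (hφ : AntitoneOn φ (Ici 0)) {s : ℝ} (hs : 0 ≤ s)
    (h : 0 < distrib φ s) : ENNReal.ofReal s < essSupOnIci φ := by
  obtain ⟨y, ⟨hy0, hsy⟩, hy⟩ : ∃ y ∈ {x ∈ Ici (0 : ℝ) | s < φ x}, y ∉ ({0} : Set ℝ) :=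
    not_subset.1 fun hsub => h.ne' (measure_mono_null hsub Real.volume_singleton)
  calc ENNReal.ofReal s < ENNReal.ofReal (φ y) := (ENNReal.ofReal_lt_ofReal_iff_of_nonneg hs).2 hsy
    _ ≤ essSupOnIci φ := ofReal_le_essSupOnIci hφ (lt_of_le_of_ne hy0 (Ne.symm hy))

theorem distrib_pos_iff (hφ : AntitoneOn φ (Ici 0)) {s : ℝ} (hs : 0 ≤ s) :
    0 < distrib φ s ↔ ENNReal.ofReal s < essSupOnIci φ :=
  ⟨ofReal_lt_essSupOnIci_of_distrib_pos hφ hs, distrib_pos_of_ofReal_lt_essSupOnIci⟩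

theorem volume_essSupPlateau_le_distrib {s : ℝ} (hs : ENNReal.ofReal s < essSupOnIci φ) :
    volume (essSupPlateau φ) ≤ distrib φ s := by
  refine measure_mono fun x hx => ⟨hx.1, ?_⟩
  by_contra! hc
  exact (hx.2 ▸ hs).not_ge (ENNReal.ofReal_le_ofReal hc)

theorem distrib_apply_le_ofReal (hφ : AntitoneOn φ (Ici 0)) {x : ℝ} (hx : 0 ≤ x) :
    distrib φ (φ x) ≤ ENNReal.ofReal x := by
  have hsub : {y ∈ Ici (0 : ℝ) | φ x < φ y} ⊆ Icc 0 x := fun y hy =>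
    ⟨hy.1, not_lt.1 fun hxy => hy.2.not_ge (hφ hx hy.1 hxy.le)⟩
  calc distrib φ (φ x) ≤ volume (Icc 0 x) := measure_mono hsub
    _ = ENNReal.ofReal x := by rw [Real.volume_Icc, sub_zero]

theorem ofReal_lt_essSupOnIci_of_volume_lt (hφ : AntitoneOn φ (Ici 0)) {x : ℝ} (hx : 0 < x)
    (h : volume (essSupPlateau φ) < ENNReal.ofReal x) : ENNReal.ofReal (φ x) < essSupOnIci φ := by
  refine (ofReal_le_essSupOnIci hφ hx).lt_of_ne fun heq => h.not_ge ?_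
  have hsub : Ioc 0 x ⊆ essSupPlateau φ := fun y hy =>
    ⟨hy.1.le, le_antisymm (ofReal_le_essSupOnIci hφ hy.1)
      (heq ▸ ENNReal.ofReal_le_ofReal (hφ hy.1.le hx.le hy.2))⟩
  simpa using measure_mono (μ := volume) hsub

theorem Ico_subset_setOf_distrib_pos_le (hφ : AntitoneOn φ (Ici 0)) {x : ℝ} (hx : 0 ≤ x) :
    Ico (ENNReal.ofReal (φ x)).toReal (essSupOnIci φ).toReal ⊆
      {s ∈ Ici 0 | 0 < distrib φ s ∧ distrib φ s ≤ ENNReal.ofReal x} := by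
  rintro s ⟨hxs, hsM⟩
  have hs : 0 ≤ s := ENNReal.toReal_nonneg.trans hxs
  have hsM' := (ENNReal.ofReal_lt_iff_lt_toReal hs (essSupOnIci_ne_top hφ)).2 hsM
  rw [ENNReal.toReal_ofReal'] at hxs
  exact ⟨hs, (distrib_pos_iff hφ hs).2 hsM',
    (distrib_antitone φ ((le_max_left _ _).trans hxs)).trans (distrib_apply_le_ofReal hφ hx)⟩

end EssSupOnIci

theorem stmt11_general (φ : ℝ → ℝ) (hmono : AntitoneOn φ (Set.Ici 0))
    (lam : ℝ) :
    0 < volume {s ∈ Set.Ici (0 : ℝ) | 0 < distrib φ s ∧ distrib φ s < ENNReal.ofReal lam} ↔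
      volume {x ∈ Set.Ici (0 : ℝ) | ENNReal.ofReal (φ x)
          = essSup (fun x => ENNReal.ofReal (φ x)) (volume.restrict (Set.Ici 0))}
        < ENNReal.ofReal lam := by
  change _ ↔ volume (essSupPlateau φ) < _
  constructor
  · intro hpos
    obtain ⟨s, hs, hrs, hrlam⟩ := nonempty_of_measure_ne_zero hpos.ne'
    exact (volume_essSupPlateau_le_distrib ((distrib_pos_iff hmono hs).1 hrs)).trans_lt hrlam
  · intro hη
    obtain ⟨x, -, hηx, hxlam⟩ := ENNReal.lt_iff_exists_real_btwn.1 hη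
    have hx : 0 < x := ENNReal.ofReal_pos.1 (pos_of_gt hηx)
    have hxM := ofReal_lt_essSupOnIci_of_volume_lt hmono hx hηx
    have hsub := Ico_subset_setOf_distrib_pos_le hmono hx.le
    refine lt_of_lt_of_le ?_ (measure_mono (hsub.trans fun s hs => ?_))
    · simpa using ENNReal.toReal_strict_mono (essSupOnIci_ne_top hmono) hxM
    · exact ⟨hs.1, hs.2.1, hs.2.2.trans_lt hxlam⟩

theorem stmt11 (φ : ℝ → ℝ) (hmono : AntitoneOn φ (Set.Ici 0))
    (hnn : ∀ x ∈ Set.Ici (0 : ℝ), 0 ≤ φ x) (lam : ℝ) (hlam : 0 < lam) :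
    0 < volume {s ∈ Set.Ici (0 : ℝ) | 0 < distrib φ s ∧ distrib φ s < ENNReal.ofReal lam} ↔
      volume {x ∈ Set.Ici (0 : ℝ) | ENNReal.ofReal (φ x)
          = essSup (fun x => ENNReal.ofReal (φ x)) (volume.restrict (Set.Ici 0))}
        < ENNReal.ofReal lam :=
  stmt11_general φ hmono lam
end

section
/- In ℝ^d with d ≥ 2, let H₀ be a hyperplane with unit normal ν, H₀⁺ its positive closed halfspace, and let p₁ = z + t₁ν, p₂ = z + t₂ν with z ∈ H₀ and 0 < t₂ < t₁ < ρ. Then |H₀⁺ ∩ (B_ρ(p₂) \ B_ρ(p₁))| ≤ 2(d−1)ω_{d−1} ρ^{d−3} t₁² (t₁ − t₂), where ω_{d−1} is the volume of the unit ball in ℝ^{d−1}. -/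
open MeasureTheory Metric Set Filter
open scoped RealInnerProductSpace symmDiff ENNReal

/-!
Write a point as `(a, u)`, with `a = ⟪y - z, ν⟫` its height above `H₀` and `u` its component
in `H₀`, and put `r(u) = √(ρ² - ‖u‖²)`. A point of the region satisfies
`|a - t₂| < r(u) ≤ |a - t₁|`, so `a ∈ (t₂ - r(u), t₁ - r(u)]`; since `a ≥ 0` this also forces
`r(u) ≤ t₁`, i.e. `u` lies in the annulus `√(ρ² - t₁²) ≤ ‖u‖ < ρ` of `ℝ^{d-1}`. By Fubini the
volume is at most `(t₁ - t₂) ω_{d-1} (ρ^{d-1} - r^{d-1})` with `r = √(ρ² - t₁²)`, and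
`ρ^m - r^m ≤ m ρ^{m-1} (ρ - r)` together with `ρ (ρ - r) ≤ ρ² - r² = t₁²` gives the bound.
-/

namespace EuclideanSpace

def headTail {n : ℕ} (x : EuclideanSpace ℝ (Fin (n + 1))) : ℝ × EuclideanSpace ℝ (Fin n) :=
  (x 0, WithLp.toLp 2 fun j => x j.succ)

theorem measurePreserving_headTail (n : ℕ) : MeasurePreserving (headTail (n := n)) := by
  rw [Measure.volume_eq_prod]
  exact ((MeasurePreserving.id volume).prod (PiLp.volume_preserving_toLp (Fin n))).comp
    ((volume_preserving_piFinSuccAbove (fun _ : Fin (n + 1) => ℝ) 0).comp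
      (PiLp.volume_preserving_ofLp (Fin (n + 1))))

theorem norm_sq_eq_headTail {n : ℕ} (x : EuclideanSpace ℝ (Fin (n + 1))) :
    ‖x‖ ^ 2 = (headTail x).1 ^ 2 + ‖(headTail x).2‖ ^ 2 := by
  simp only [real_norm_sq_eq, Fin.sum_univ_succ, headTail]

theorem headTail_sub_smul_single_zero {n : ℕ} (x : EuclideanSpace ℝ (Fin (n + 1))) (t : ℝ) :
    headTail (x - t • single 0 1) = ((headTail x).1 - t, (headTail x).2) := by
  ext j
  · simp [headTail]
  · simp [headTail]

end EuclideanSpace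

theorem exists_orthonormalBasis_apply_zero_eq {E : Type*} [NormedAddCommGroup E]
    [InnerProductSpace ℝ E] [FiniteDimensional ℝ E] {n : ℕ} (hE : Module.finrank ℝ E = n + 1)
    {ν : E} (hν : ‖ν‖ = 1) :
    ∃ b : OrthonormalBasis (Fin (n + 1)) ℝ E, b 0 = ν := by
  have hon : Orthonormal ℝ (({0} : Set (Fin (n + 1))).domRestrict fun _ => ν) :=
    ⟨fun _ => hν, fun i j hij => absurd (Subtype.ext (i.2.trans j.2.symm)) hij⟩
  obtain ⟨b, hb⟩ := hon.exists_orthonormalBasis_extension_of_card_eq (by simpa using hE)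
  exact ⟨b, hb 0 rfl⟩

theorem MeasureTheory.Measure.prod_apply_le_mul_of_sections {α β : Type*} [MeasurableSpace α]
    [MeasurableSpace β] {μ : Measure α} {ν : Measure β} [SFinite μ] [SFinite ν]
    {s : Set (α × β)} (hs : MeasurableSet s) {W : Set β} (hW : MeasurableSet W)
    (hsW : ∀ p ∈ s, p.2 ∈ W) {c : ℝ≥0∞} (hc : ∀ b, μ ((fun a => (a, b)) ⁻¹' s) ≤ c) :
    μ.prod ν s ≤ c * ν W := by
  rw [Measure.prod_apply_symm hs, ← lintegral_indicator_const hW]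
  refine lintegral_mono fun b => ?_
  by_cases hb : b ∈ W
  · simpa [hb] using hc b
  · have : (fun a => (a, b)) ⁻¹' s = ∅ :=
      eq_empty_of_forall_notMem fun a ha => hb (hsW _ ha)
    simp [this]

theorem MeasureTheory.Measure.addHaar_ball_diff_ball {E : Type*} [NormedAddCommGroup E]
    [NormedSpace ℝ E] [MeasurableSpace E] [BorelSpace E] [FiniteDimensional ℝ E]
    (μ : Measure E) [μ.IsAddHaarMeasure] (x : E) {r R : ℝ} (hr : 0 < r) (hrR : r ≤ R) :
    μ (ball x R \ ball x r) =
      ENNReal.ofReal (R ^ Module.finrank ℝ E - r ^ Module.finrank ℝ E) * μ (ball 0 1) := by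
  rw [measure_sdiff (ball_subset_ball hrR) measurableSet_ball.nullMeasurableSet
    measure_ball_lt_top.ne, addHaar_ball_of_pos μ x hr, addHaar_ball_of_pos μ x (hr.trans_le hrR),
    ← ENNReal.sub_mul (fun _ _ => measure_ball_lt_top.ne), ← ENNReal.ofReal_sub]
  positivity

theorem pow_sub_sqrt_sq_sub_sq_pow_le {ρ t : ℝ} (hρ : 0 < ρ) (ht : t ^ 2 ≤ ρ ^ 2) (m : ℕ) :
    ρ ^ m - √(ρ ^ 2 - t ^ 2) ^ m ≤ m * ρ ^ ((m : ℝ) - 2) * t ^ 2 := by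
  set r := √(ρ ^ 2 - t ^ 2)
  have hr0 : 0 ≤ r := Real.sqrt_nonneg _
  have hr2 : r ^ 2 = ρ ^ 2 - t ^ 2 := Real.sq_sqrt (by linarith)
  have hrρ : r ≤ ρ := by nlinarith
  have hρr : ρ * (ρ - r) ≤ t ^ 2 := by nlinarith
  have hmvt : ρ ^ m - r ^ m ≤ (ρ - r) * m * ρ ^ (m - 1) := by
    simpa [abs_of_nonneg, hr0, hρ.le, hrρ, sub_nonneg, pow_le_pow_left₀] using
      (le_abs_self _).trans (abs_pow_sub_pow_le ρ r m)
  rcases m with _ | m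
  · simp
  rw [show ((m + 1 : ℕ) : ℝ) - 2 = (m : ℝ) - 1 by push_cast; ring, Real.rpow_sub_one hρ.ne',
    Real.rpow_natCast]
  calc ρ ^ (m + 1) - r ^ (m + 1) ≤ (ρ - r) * (m + 1 : ℕ) * ρ ^ m := hmvt
    _ = (m + 1 : ℕ) * (ρ ^ m / ρ) * (ρ * (ρ - r)) := by field_simp
    _ ≤ (m + 1 : ℕ) * (ρ ^ m / ρ) * t ^ 2 := by gcongr

/-- `H₀⁺ ∩ (B_ρ(z + t₂ ν) \ B_ρ(z + t₁ ν))` in the coordinates `(⟪y - z, ν⟫, y')`, where `y'` is the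
component of `y - z` orthogonal to `ν`. -/
def upperBallDiff (F : Type*) [Norm F] (t₁ t₂ ρ : ℝ) : Set (ℝ × F) :=
  {p | 0 ≤ p.1 ∧ (p.1 - t₂) ^ 2 + ‖p.2‖ ^ 2 < ρ ^ 2 ∧ ρ ^ 2 ≤ (p.1 - t₁) ^ 2 + ‖p.2‖ ^ 2}

section upperBallDiff

variable {F : Type*} [NormedAddCommGroup F] {t₁ t₂ ρ : ℝ}

theorem measurableSet_upperBallDiff [MeasurableSpace F] [OpensMeasurableSpace F] :
    MeasurableSet (upperBallDiff F t₁ t₂ ρ) :=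
  (measurableSet_le measurable_const measurable_fst).inter
    ((measurableSet_lt (f := fun p : ℝ × F => (p.1 - t₂) ^ 2 + ‖p.2‖ ^ 2) (by fun_prop)
      measurable_const).inter
      (measurableSet_le (g := fun p : ℝ × F => (p.1 - t₁) ^ 2 + ‖p.2‖ ^ 2) measurable_const
        (by fun_prop)))

theorem mem_Ioc_of_mem_upperBallDiff (h12 : t₂ < t₁) {a : ℝ} {u : F}
    (h : (a, u) ∈ upperBallDiff F t₁ t₂ ρ) :
    a ∈ Ioc (t₂ - √(ρ ^ 2 - ‖u‖ ^ 2)) (t₁ - √(ρ ^ 2 - ‖u‖ ^ 2)) := by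
  obtain ⟨-, h₂, h₁⟩ := h
  have hr := Real.sq_sqrt (show 0 ≤ ρ ^ 2 - ‖u‖ ^ 2 by nlinarith)
  have hr0 := Real.sqrt_nonneg (ρ ^ 2 - ‖u‖ ^ 2)
  have hmid : 2 * a < t₁ + t₂ := by nlinarith
  constructor <;> nlinarith

theorem volume_upperBallDiff_le [MeasurableSpace F] [BorelSpace F] {μ : Measure F} [SFinite μ]
    (h12 : t₂ < t₁) (h1ρ : t₁ < ρ) :
    (volume.prod μ) (upperBallDiff F t₁ t₂ ρ) ≤
      ENNReal.ofReal (t₁ - t₂) * μ (ball 0 ρ \ ball 0 √(ρ ^ 2 - t₁ ^ 2)) := by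
  refine Measure.prod_apply_le_mul_of_sections measurableSet_upperBallDiff
    (measurableSet_ball.diff measurableSet_ball) (fun p h => ?_) fun u => ?_
  · obtain ⟨a, u⟩ := p
    have hIoc := mem_Ioc_of_mem_upperBallDiff h12 h
    obtain ⟨ha, h₂, -⟩ := h
    have hr0 := Real.sqrt_nonneg (ρ ^ 2 - ‖u‖ ^ 2)
    have hrt : √(ρ ^ 2 - ‖u‖ ^ 2) ≤ t₁ := by linarith [hIoc.2]
    have hu : ‖u‖ < ρ := by nlinarith [norm_nonneg u]
    refine ⟨by simpa using hu, ?_⟩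
    have : ρ ^ 2 - t₁ ^ 2 ≤ ‖u‖ ^ 2 := by
      nlinarith [Real.sq_sqrt (show 0 ≤ ρ ^ 2 - ‖u‖ ^ 2 by nlinarith [norm_nonneg u])]
    simpa using Real.sqrt_le_sqrt this |>.trans_eq (Real.sqrt_sq (norm_nonneg u))
  · calc volume ((fun a => (a, u)) ⁻¹' upperBallDiff F t₁ t₂ ρ)
        ≤ volume (Ioc (t₂ - √(ρ ^ 2 - ‖u‖ ^ 2)) (t₁ - √(ρ ^ 2 - ‖u‖ ^ 2))) :=
          measure_mono fun a => mem_Ioc_of_mem_upperBallDiff h12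
      _ = ENNReal.ofReal (t₁ - t₂) := by rw [Real.volume_Ioc]; ring_nf

theorem volume_upperBallDiff_le_ofReal [MeasurableSpace F] [BorelSpace F] [NormedSpace ℝ F]
    [FiniteDimensional ℝ F] {μ : Measure F} [μ.IsAddHaarMeasure] (ht₁ : 0 < t₁) (h12 : t₂ < t₁)
    (h1ρ : t₁ < ρ) :
    (volume.prod μ) (upperBallDiff F t₁ t₂ ρ) ≤
      ENNReal.ofReal (Module.finrank ℝ F * ρ ^ ((Module.finrank ℝ F : ℝ) - 2) * t₁ ^ 2 *
        (t₁ - t₂)) * μ (ball 0 1) := by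
  have hρ : 0 < ρ := ht₁.trans h1ρ
  have hr : 0 < √(ρ ^ 2 - t₁ ^ 2) := Real.sqrt_pos.2 (by nlinarith)
  calc (volume.prod μ) (upperBallDiff F t₁ t₂ ρ)
      ≤ ENNReal.ofReal (t₁ - t₂) * μ (ball 0 ρ \ ball 0 √(ρ ^ 2 - t₁ ^ 2)) :=
        volume_upperBallDiff_le h12 h1ρ
    _ = ENNReal.ofReal ((ρ ^ Module.finrank ℝ F - √(ρ ^ 2 - t₁ ^ 2) ^ Module.finrank ℝ F) *
          (t₁ - t₂)) * μ (ball 0 1) := by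
        rw [Measure.addHaar_ball_diff_ball _ _ hr ((Real.sqrt_le_left hρ.le).2 (by nlinarith)),
          ← mul_assoc, ← ENNReal.ofReal_mul (by linarith), mul_comm (t₁ - t₂)]
    _ ≤ _ := by
        gcongr
        exact pow_sub_sqrt_sq_sub_sq_pow_le hρ (by nlinarith) _

end upperBallDiff

theorem OrthonormalBasis.halfspace_inter_ball_diff_ball_eq_preimage {E : Type*}
    [NormedAddCommGroup E] [InnerProductSpace ℝ E] {n : ℕ} (b : OrthonormalBasis (Fin (n + 1)) ℝ E)
    (z : E) {t₁ t₂ ρ : ℝ} (hρ : 0 ≤ ρ) :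
    {y | 0 ≤ ⟪y - z, b 0⟫} ∩ (ball (z + t₂ • b 0) ρ \ ball (z + t₁ • b 0) ρ) =
      (fun y => EuclideanSpace.headTail (b.repr (y - z))) ⁻¹' upperBallDiff _ t₁ t₂ ρ := by
  have hdist (y : E) (t : ℝ) : dist y (z + t • b 0) ^ 2 =
      ((EuclideanSpace.headTail (b.repr (y - z))).1 - t) ^ 2 +
        ‖(EuclideanSpace.headTail (b.repr (y - z))).2‖ ^ 2 := by
    rw [dist_eq_norm, show y - (z + t • b 0) = y - z - t • b 0 by abel, ← b.repr.norm_map,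
      map_sub, map_smul, b.repr_self, EuclideanSpace.norm_sq_eq_headTail,
      EuclideanSpace.headTail_sub_smul_single_zero]
  ext y
  simp only [mem_inter_iff, mem_ofPred_eq, Set.mem_sdiff, mem_ball, not_lt, mem_preimage,
    upperBallDiff, ← hdist, ← sq_lt_sq₀ dist_nonneg hρ]
  rw [EuclideanSpace.headTail, b.repr_apply_apply, real_inner_comm]

theorem stmt14_general {d : ℕ} (z ν : EuclideanSpace ℝ (Fin d)) (hν : ‖ν‖ = 1)
    (t₁ t₂ ρ : ℝ) (ht₂ : 0 < t₂) (h12 : t₂ < t₁) (h1ρ : t₁ < ρ) :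
    volume ({y : EuclideanSpace ℝ (Fin d) | 0 ≤ ⟪y - z, ν⟫}
        ∩ (Metric.ball (z + t₂ • ν) ρ \ Metric.ball (z + t₁ • ν) ρ)) ≤
      ENNReal.ofReal
        (2 * ((d : ℝ) - 1)
          * (volume (Metric.ball (0 : EuclideanSpace ℝ (Fin (d - 1))) 1)).toReal
          * ρ ^ ((d : ℝ) - 3) * t₁ ^ 2 * (t₁ - t₂)) := by
  obtain ⟨n, rfl⟩ : ∃ n, d = n + 1 :=
    Nat.exists_eq_succ_of_ne_zero (by rintro rfl; simp [Subsingleton.elim ν 0] at hν)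
  obtain ⟨b, rfl⟩ := exists_orthonormalBasis_apply_zero_eq finrank_euclideanSpace_fin hν
  have ht₁ : 0 < t₁ := ht₂.trans h12
  have hρ : 0 < ρ := ht₁.trans h1ρ
  have hΦ : MeasurePreserving fun y => EuclideanSpace.headTail (b.repr (y - z)) :=
    (EuclideanSpace.measurePreserving_headTail n).comp
      (b.measurePreserving_repr.comp (measurePreserving_sub_right volume z))
  rw [b.halfspace_inter_ball_diff_ball_eq_preimage z hρ.le,
    hΦ.measure_preimage measurableSet_upperBallDiff.nullMeasurableSet, Measure.volume_eq_prod]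
  refine (volume_upperBallDiff_le_ofReal ht₁ h12 h1ρ).trans ?_
  have hcast : ((n + 1 : ℕ) : ℝ) - 1 = n ∧ ((n + 1 : ℕ) : ℝ) - 3 = n - 2 := by
    constructor <;> push_cast <;> ring
  have hbound : 0 ≤ n * ρ ^ ((n : ℝ) - 2) * t₁ ^ 2 * (t₁ - t₂) :=
    mul_nonneg (by positivity) (by linarith)
  rw [finrank_euclideanSpace_fin, hcast.1, hcast.2]
  set ω := volume (ball (0 : EuclideanSpace ℝ (Fin n)) 1)
  have hω : ω ≠ ⊤ := measure_ball_lt_top.ne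
  conv_lhs => rw [← ENNReal.ofReal_toReal hω, ← ENNReal.ofReal_mul hbound]
  exact ENNReal.ofReal_le_ofReal (by nlinarith [mul_nonneg hbound (ENNReal.toReal_nonneg (a := ω))])

theorem stmt14 {d : ℕ} (hd : 2 ≤ d) (z ν : EuclideanSpace ℝ (Fin d)) (hν : ‖ν‖ = 1)
    (t₁ t₂ ρ : ℝ) (ht₂ : 0 < t₂) (h12 : t₂ < t₁) (h1ρ : t₁ < ρ) :
    volume ({y : EuclideanSpace ℝ (Fin d) | 0 ≤ ⟪y - z, ν⟫}
        ∩ (Metric.ball (z + t₂ • ν) ρ \ Metric.ball (z + t₁ • ν) ρ)) ≤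
      ENNReal.ofReal
        (2 * ((d : ℝ) - 1)
          * (volume (Metric.ball (0 : EuclideanSpace ℝ (Fin (d - 1))) 1)).toReal
          * ρ ^ ((d : ℝ) - 3) * t₁ ^ 2 * (t₁ - t₂)) :=
  stmt14_general z ν hν t₁ t₂ ρ ht₂ h12 h1ρ
end
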